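/- arXiv:2012.01408 — 2 statements merged into one kernel-verified Lean document; each statement's English description precedes it below -/
import Mathlib

section
/- Let k ≥ 1 be an integer with k ≢ 1 (mod 3). For 1 ≤ i ≤ k let α_i = 2·cos(2πi/(2k+1)) ∈ ℂ and let ℚ(α_i) ⊆ ℂ be the subfield generated by α_i over ℚ. Then there are infinitely many primes p such that 2 is not a square in ℤ/pℤ and, for every 1 ≤ i ≤ k, every nonzero prime ideal of the ring of integers of ℚ(α_i) lying over p has inertia degree at least two over p. -/
/-!
Put `n = 2k + 1`. By Dirichlet's theorem there are infinitely many primes `p ≡ 3 (mod 8)`, so that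
`2` is not a square mod `p`, with `p ≡ 2 (mod n)`. Each `α_i = ζ + ζ⁻¹`, with `ζ ^ n = 1` and
`ζ ≠ 1`, is a root of the integer polynomial `G_k = symmGeomSum k`, for which
`G_k(t + t⁻¹) = t⁻ᵏ (1 + t + ⋯ + t²ᵏ)`.
A prime above `p` of residue degree one would give a root `a = t + t⁻¹` of `G_k` in `𝔽_p`. Then
`t ^ n = 1`, and `t ^ (p²) = t` because Frobenius fixes `a`; as `p² ≡ 4 (mod n)` this gives
`t³ = 1`, so `t = 1` since `3 ∤ n`. But `G_k(2) = n`, which is nonzero mod `p`.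
-/

open Polynomial Finset NumberField IntermediateField

noncomputable def symmGeomSum (k : ℕ) : ℤ[X] := 1 + ∑ j ∈ range k, dickson 1 1 (j + 1)

lemma aeval_add_dickson_one_one {R : Type*} [CommRing R] {x y : R} (h : x * y = 1) (m : ℕ) :
    aeval (x + y) (dickson 1 (1 : ℤ) m) = x ^ m + y ^ m := by
  rw [aeval_def, eval₂_eq_eval_map, map_dickson, map_one, dickson_one_one_eval_add_inv x y h]

lemma pow_mul_aeval_symmGeomSum {R : Type*} [CommRing R] {x y : R} (h : x * y = 1) (k : ℕ) :
    x ^ k * aeval (x + y) (symmGeomSum k) = ∑ j ∈ range (2 * k + 1), x ^ j := by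
  induction k with
  | zero => simp [symmGeomSum]
  | succ k ih =>
    have hxy : x ^ (k + 1) * y ^ (k + 1) = 1 := by rw [← mul_pow, h, one_pow]
    rw [symmGeomSum, sum_range_succ, ← add_assoc, ← symmGeomSum, map_add,
      aeval_add_dickson_one_one h, show 2 * (k + 1) + 1 = 2 * k + 1 + 1 + 1 by ring,
      geom_sum_succ, sum_range_succ, ← ih]
    linear_combination hxy

lemma aeval_add_inv_symmGeomSum_eq_zero_iff {K : Type*} [Field K] {t : K} (ht : t ≠ 0)
    (k : ℕ) : aeval (t + t⁻¹) (symmGeomSum k) = 0 ↔ ∑ j ∈ range (2 * k + 1), t ^ j = 0 := by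
  rw [← pow_mul_aeval_symmGeomSum (mul_inv_cancel₀ ht), mul_eq_zero,
    or_iff_right (pow_ne_zero _ ht)]

lemma aeval_add_inv_symmGeomSum_eq_zero {K : Type*} [Field K] {ζ : K} {k : ℕ}
    (hζ : ζ ^ (2 * k + 1) = 1) (hζ1 : ζ ≠ 1) : aeval (ζ + ζ⁻¹) (symmGeomSum k) = 0 := by
  rw [aeval_add_inv_symmGeomSum_eq_zero_iff ((IsUnit.of_pow_eq_one hζ (by omega)).ne_zero),
    geom_sum_eq hζ1, hζ, sub_self, zero_div]

lemma isIntegral_add_inv_of_pow_eq_one {K : Type*} [Field K] {ζ : K} {n : ℕ} (hn : n ≠ 0)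
    (hζ : ζ ^ n = 1) : IsIntegral ℤ (ζ + ζ⁻¹) := by
  have root_isIntegral {x : K} (hx : x ^ n = 1) : IsIntegral ℤ x :=
    IsIntegral.of_pow (Nat.pos_of_ne_zero hn) (hx ▸ isIntegral_one)
  exact (root_isIntegral hζ).add (root_isIntegral (by rw [inv_pow, hζ, inv_one]))

lemma Complex.exists_two_mul_cos_eq_add_inv {i n : ℕ} (hi : i ≠ 0) (hin : i < n) :
    ∃ ζ : ℂ, ζ ^ n = 1 ∧ ζ ≠ 1 ∧ 2 * cos (2 * Real.pi * i / n) = ζ + ζ⁻¹ := by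
  have hω := isPrimitiveRoot_exp n (by omega)
  refine ⟨exp (2 * Real.pi * I / n) ^ i, by rw [pow_right_comm, hω.pow_eq_one, one_pow],
    hω.pow_ne_one_of_pos_of_lt hi hin, ?_⟩
  rw [two_cos, neg_mul, exp_neg, ← exp_nat_mul]
  ring_nf

lemma exists_add_inv_eq {K : Type*} [Field K] [IsAlgClosed K] (b : K) :
    ∃ t ≠ 0, t + t⁻¹ = b := by
  obtain ⟨t, ht⟩ := IsAlgClosed.exists_root (X ^ 2 - C b * X + 1) (by
    rw [show (X ^ 2 - C b * X + 1 : K[X]).degree = 2 by compute_degree!]; exact two_ne_zero)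
  have ht : t * (t - b) = -1 := by
    simp only [IsRoot, eval_add, eval_sub, eval_pow, eval_X, eval_mul, eval_C, eval_one] at ht
    linear_combination ht
  have ht0 : t ≠ 0 := by rintro rfl; simp at ht
  refine ⟨t, ht0, ?_⟩
  field_simp
  linear_combination ht

lemma pow_char_sq_eq_self_of_add_inv {K : Type*} [Field K] (p : ℕ) [Fact p.Prime] [CharP K p]
    {t : K} (ht : t ≠ 0) (h : (t + t⁻¹) ^ p = t + t⁻¹) : t ^ (p ^ 2) = t := by
  rw [add_pow_char, inv_pow] at h
  -- `t ^ p` is again a root of `X² - (t + t⁻¹) X + 1`, whose roots are `t` and `t⁻¹`.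
  have hs : (t ^ p - t) * (t ^ p - t⁻¹) = 0 := by
    have htp : t ^ p ≠ 0 := pow_ne_zero _ ht
    field_simp at h
    field_simp
    linear_combination h
  rw [sq, pow_mul]
  rcases mul_eq_zero.mp hs with hs | hs
  · rw [sub_eq_zero.mp hs, sub_eq_zero.mp hs]
  · rw [sub_eq_zero.mp hs, inv_pow, sub_eq_zero.mp hs, inv_inv]

lemma eq_one_of_pow_eq_one_of_pow_sq_eq {K : Type*} [Field K] {t : K} (ht : t ≠ 0) {n p : ℕ}
    (hn : t ^ n = 1) (h3 : ¬ 3 ∣ n) (hp : p ≡ 2 [MOD n]) (htp : t ^ (p ^ 2) = t) : t = 1 := by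
  have h4 : t ^ 4 = t := by
    have hp4 : p ^ 2 % n = 4 % n := hp.pow 2
    rw [pow_eq_pow_mod 4 hn, ← hp4, ← pow_eq_pow_mod _ hn, htp]
  have h3' : t ^ 3 = 1 := mul_left_cancel₀ ht (by rw [← pow_succ', h4, mul_one])
  have hcop : Nat.Coprime 3 n := (Nat.Prime.coprime_iff_not_dvd Nat.prime_three).mpr h3
  exact (pow_eq_one_iff_of_coprime hcop).mp ⟨h3', hn⟩

theorem aeval_symmGeomSum_ne_zero {p k : ℕ} [hp : Fact p.Prime] (hpk : p ≡ 2 [MOD 2 * k + 1])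
    (h3 : ¬ 3 ∣ 2 * k + 1) (a : ZMod p) : aeval a (symmGeomSum k) ≠ 0 := by
  intro ha
  obtain ⟨t, ht0, ht⟩ := exists_add_inv_eq (algebraMap (ZMod p) (AlgebraicClosure (ZMod p)) a)
  have hsum : ∑ j ∈ range (2 * k + 1), t ^ j = 0 := by
    rw [← aeval_add_inv_symmGeomSum_eq_zero_iff ht0, ht, aeval_algebraMap_apply, ha, map_zero]
  have htn : t ^ (2 * k + 1) = 1 := by
    rw [← sub_eq_zero, ← geom_sum_mul, hsum, zero_mul]
  have htp : t ^ (p ^ 2) = t :=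
    pow_char_sq_eq_self_of_add_inv p ht0 (by rw [ht, ← map_pow, ZMod.pow_card])
  have ht1 : t = 1 := eq_one_of_pow_eq_one_of_pow_sq_eq ht0 htn h3 hpk htp
  have hdvd : p ∣ 2 * k + 1 := by
    rw [ht1] at hsum
    simp only [one_pow, sum_const, card_range, nsmul_eq_mul, mul_one] at hsum
    exact (CharP.cast_eq_zero_iff _ p _).mp hsum
  have h2 : p ∣ 2 := (hpk.dvd_iff hdvd).mp dvd_rfl
  rw [(Nat.prime_dvd_prime_iff_eq hp.out Nat.prime_two).mp h2] at hdvd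
  omega

lemma exists_ringHom_zmod_of_inertiaDeg'_eq_one {S : Type*} [CommRing S] {p : ℕ} [Fact p.Prime]
    (P : Ideal S) [P.LiesOver (Ideal.span {(p : ℤ)})]
    (h : Ideal.inertiaDeg' (Ideal.span {(p : ℤ)}) P = 1) : Nonempty (S →+* ZMod p) := by
  let _ := Ideal.Quotient.field (Ideal.span {(p : ℤ)})
  rw [Ideal.inertiaDeg'_algebraMap, Algebra.finrank_eq_one_iff_bijective_algebraMap] at h
  exact ⟨(Int.quotientSpanNatEquivZMod p).toRingHom.comp
    ((RingEquiv.ofBijective _ h).symm.toRingHom.comp (Ideal.Quotient.mk P))⟩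

theorem two_le_inertiaDeg'_of_aeval_symmGeomSum_eq_zero {S : Type*} [CommRing S]
    [Module.Finite ℤ S] {p k : ℕ} [Fact p.Prime] (hpk : p ≡ 2 [MOD 2 * k + 1])
    (h3 : ¬ 3 ∣ 2 * k + 1) {A : S} (hA : aeval A (symmGeomSum k) = 0) (P : Ideal S) [P.IsPrime]
    [P.LiesOver (Ideal.span {(p : ℤ)})] : 2 ≤ Ideal.inertiaDeg' (Ideal.span {(p : ℤ)}) P := by
  by_contra! h
  obtain ⟨ψ⟩ := exists_ringHom_zmod_of_inertiaDeg'_eq_one (p := p) P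
    (by have := Ideal.inertiaDeg'_pos' (Ideal.span {(p : ℤ)}) P; omega)
  apply aeval_symmGeomSum_ne_zero hpk h3 (ψ A)
  rw [← RingHom.toIntAlgHom_apply, aeval_algHom_apply, hA, map_zero]

theorem Nat.infinite_setOf_prime_modEq_and_modEq {m n a b : ℕ} [NeZero m] [NeZero n]
    (hmn : m.Coprime n) (ha : a.Coprime m) (hb : b.Coprime n) :
    {p | p.Prime ∧ p ≡ a [MOD m] ∧ p ≡ b [MOD n]}.Infinite := by
  let c := Nat.chineseRemainder hmn a b
  have hc : (c : ℕ).Coprime (m * n) :=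
    Nat.Coprime.mul_right (c.2.1.gcd_eq.trans ha) (c.2.2.gcd_eq.trans hb)
  refine (Nat.infinite_setOfPred_prime_and_eq_mod
    ((ZMod.isUnit_iff_coprime c (m * n)).mpr hc)).mono ?_
  rintro p ⟨hp, hpc⟩
  have hpc : p ≡ c [MOD m * n] := (ZMod.natCast_eq_natCast_iff _ _ _).mp hpc
  exact ⟨hp, (hpc.of_mul_right n).trans c.2.1, (hpc.of_mul_left m).trans c.2.2⟩

lemma IntermediateField.numberField_adjoin_simple {L : Type*} [Field L] [CharZero L] {α : L}
    (hα : IsIntegral ℚ α) : NumberField ℚ⟮α⟯ :=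
  have := adjoin.finiteDimensional hα
  {}

lemma IntermediateField.exists_ringOfIntegers_adjoin_simple_aeval_eq_zero {L : Type*} [Field L]
    [CharZero L] {α : L} (hα : IsIntegral ℤ α) {f : ℤ[X]} (hf : aeval α f = 0) :
    ∃ A : 𝓞 ℚ⟮α⟯, aeval A f = 0 := by
  have hgen : AdjoinSimple.gen ℚ α ∈ integralClosure ℤ ℚ⟮α⟯ :=
    (isIntegral_algebraMap_iff (algebraMap ℚ⟮α⟯ L).injective).mp hα
  have hinj : Function.Injective (algebraMap (𝓞 ℚ⟮α⟯) L) := by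
    rw [IsScalarTower.algebraMap_eq (𝓞 ℚ⟮α⟯) ℚ⟮α⟯ L]
    exact (algebraMap ℚ⟮α⟯ L).injective.comp RingOfIntegers.coe_injective
  let A : 𝓞 ℚ⟮α⟯ := ⟨_, hgen⟩
  exact ⟨A, hinj <| (aeval_algebraMap_apply L A f).symm.trans (hf.trans (map_zero _).symm)⟩

theorem two_le_inertiaDeg'_adjoin_add_inv {L : Type*} [Field L] [CharZero L] {k p : ℕ}
    [Fact p.Prime] (hpk : p ≡ 2 [MOD 2 * k + 1]) (h3 : ¬ 3 ∣ 2 * k + 1) {α ζ : L}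
    (hζ : ζ ^ (2 * k + 1) = 1) (hζ1 : ζ ≠ 1) (hα : α = ζ + ζ⁻¹) (P : Ideal (𝓞 ℚ⟮α⟯))
    [P.IsPrime] [P.LiesOver (Ideal.span {(p : ℤ)})] :
    2 ≤ Ideal.inertiaDeg' (Ideal.span {(p : ℤ)}) P := by
  have hαint : IsIntegral ℤ α := hα ▸ isIntegral_add_inv_of_pow_eq_one (by omega) hζ
  have := numberField_adjoin_simple hαint.tower_top
  obtain ⟨A, hA⟩ := exists_ringOfIntegers_adjoin_simple_aeval_eq_zero hαint
    (hα ▸ aeval_add_inv_symmGeomSum_eq_zero hζ hζ1)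
  exact two_le_inertiaDeg'_of_aeval_symmGeomSum_eq_zero hpk h3 hA P

theorem infinitely_many_primes_with_inertia_deg_ge_two_general
    (k : ℕ) (hk3 : ¬ (k % 3 = 1)) :
    {p : ℕ | p.Prime ∧ ¬ IsSquare (2 : ZMod p) ∧
      ∀ i ∈ Finset.Icc 1 k,
        ∀ P : Ideal (NumberField.RingOfIntegers
          (IntermediateField.adjoin ℚ
            {(2 * Complex.cos (2 * Real.pi * i / (2 * k + 1)) : ℂ)})),
          P.IsPrime → P ≠ ⊥ →
          P.comap (algebraMap ℤ (NumberField.RingOfIntegers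
            (IntermediateField.adjoin ℚ
              {(2 * Complex.cos (2 * Real.pi * i / (2 * k + 1)) : ℂ)})))
            = Ideal.span {(p : ℤ)} →
          2 ≤ Ideal.inertiaDeg'
            (Ideal.span {(p : ℤ)}) P }.Infinite := by
  have h3 : ¬ 3 ∣ 2 * k + 1 := by omega
  have hodd : Odd (2 * k + 1) := odd_two_mul_add_one k
  refine (Nat.infinite_setOf_prime_modEq_and_modEq (a := 3) (b := 2)
    ((Nat.coprime_two_left.mpr hodd).pow_left 3) (by norm_num)
    (Nat.coprime_two_left.mpr hodd)).mono ?_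
  rintro p ⟨hp, hp8, hpk⟩
  have := Fact.mk hp
  have hp8 : p % 8 = 3 := hp8
  refine ⟨hp, ?_, fun i hi P _ _ hP => ?_⟩
  · rw [ZMod.exists_sq_eq_two_iff (by omega)]
    omega
  · have : P.LiesOver (Ideal.span {(p : ℤ)}) := ⟨hP.symm⟩
    obtain ⟨hi1, hik⟩ := Finset.mem_Icc.mp hi
    obtain ⟨ζ, hζ, hζ1, hα⟩ :=
      Complex.exists_two_mul_cos_eq_add_inv (n := 2 * k + 1) (i := i) (by omega) (by omega)
    push_cast at hα
    exact two_le_inertiaDeg'_adjoin_add_inv hpk h3 hζ hζ1 hα P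

/-- Proposition 3.2: for `k ≥ 1` with `k ≢ 1 (mod 3)`, there are infinitely many primes `p`
such that `2` is not a square mod `p` and every prime of the ring of integers of
`ℚ(2cos(2πi/(2k+1)))` above `p` has inertia degree at least two, for all `1 ≤ i ≤ k`. -/
theorem infinitely_many_primes_with_inertia_deg_ge_two
    (k : ℕ) (hk : 1 ≤ k) (hk3 : ¬ (k % 3 = 1)) :
    {p : ℕ | p.Prime ∧ ¬ IsSquare (2 : ZMod p) ∧
      ∀ i ∈ Finset.Icc 1 k,
        ∀ P : Ideal (NumberField.RingOfIntegers
          (IntermediateField.adjoin ℚ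
            {(2 * Complex.cos (2 * Real.pi * i / (2 * k + 1)) : ℂ)})),
          P.IsPrime → P ≠ ⊥ →
          P.comap (algebraMap ℤ (NumberField.RingOfIntegers
            (IntermediateField.adjoin ℚ
              {(2 * Complex.cos (2 * Real.pi * i / (2 * k + 1)) : ℂ)})))
            = Ideal.span {(p : ℤ)} →
          2 ≤ Ideal.inertiaDeg'
            (Ideal.span {(p : ℤ)}) P }.Infinite :=
  infinitely_many_primes_with_inertia_deg_ge_two_general k hk3
end

section
/- Let k ≥ 1 be an integer with k ≢ 1 (mod 3) and let ε ∈ {1, −1}. Then there are infinitely many primes p such that the map PSL₂(𝔽_p) × PSL₂(𝔽_p) → PSL₂(𝔽_p) given by (x, y) ↦ x² · (x²·y·x^{2ε}·y⁻¹)^{k} is not surjective. -/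
/-!
For `X, Y ∈ SL₂` put `A = X²` and `B = Y X^{2ε} Y⁻¹`. Then `tr B = tr A` and the word is
`A (AB)^k`, whose trace is `tr A · V_k(tr AB)` by Cayley–Hamilton, `V_k` being a rescaled
Chebyshev polynomial of the third kind. Over `𝔽_p` with `p ≡ 3 (mod 8)` and
`p ≡ 2 (mod 2k+1)` neither factor vanishes: `tr A = (tr X)² - 2` and `2` is not a square,
while `V_k(tr Z) = 0` would force `Z^{2k+1} = -1`, hence `Z = -1` since `2k+1` is prime to
`|SL₂(𝔽_p)|` (here `k ≢ 1 (mod 3)` enters, as `|GL₂(𝔽_p)| ≡ 6 (mod 2k+1)`), and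
`V_k(-2) = ±(2k+1) ≠ 0`. So no word value has trace zero and the class of `[[0,-1],[1,0]]` is
missed; Dirichlet's theorem supplies infinitely many such primes.
-/

section ChebyshevV

variable {R : Type*} [CommRing R]

/-- `chebyshevV t j = (x^(2j+1) + 1) / (x^j (x + 1))` for `t = x + x⁻¹`: the Chebyshev polynomial
of the third kind, rescaled to be monic. -/
def chebyshevV (t : R) : ℕ → R
  | 0 => 1
  | 1 => t - 1
  | n + 2 => t * chebyshevV t (n + 1) - chebyshevV t n

theorem chebyshevV_neg_two : ∀ j, chebyshevV (-2 : R) j = (-1) ^ j * (2 * j + 1)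
  | 0 => by simp [chebyshevV]
  | 1 => by norm_num [chebyshevV]
  | n + 2 => by
    rw [chebyshevV, chebyshevV_neg_two (n + 1), chebyshevV_neg_two n]
    push_cast
    ring

theorem chebyshevV_smul_pow_mul_add_one {A : Type*} [Ring A] [Algebra R A] {z : A} {t : R}
    (hz : z * z = t • z - 1) :
    ∀ j, chebyshevV t j • (z ^ j * (z + 1)) = z ^ (2 * j + 1) + 1
  | 0 => by simp [chebyshevV]
  | 1 => by
    have hz3 : z ^ 3 = t • (t • z - 1) - z := by
      rw [pow_succ, pow_two, hz, sub_mul, smul_mul_assoc, hz, one_mul]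
    rw [chebyshevV, pow_one, mul_add, mul_one, hz, hz3]
    module
  | j + 2 => by
    have h1 : chebyshevV t (j + 1) • (z ^ (j + 2) * (z + 1)) = z ^ (2 * j + 4) + z := by
      rw [pow_succ' z (j + 1), mul_assoc, ← mul_smul_comm, chebyshevV_smul_pow_mul_add_one hz,
        mul_add, mul_one, ← pow_succ']
      rfl
    have h0 : chebyshevV t j • (z ^ (j + 2) * (z + 1)) = z ^ (2 * j + 3) + z * z := by
      rw [add_comm j 2, pow_add, mul_assoc, pow_two, ← mul_smul_comm,
        chebyshevV_smul_pow_mul_add_one hz, mul_add, mul_one, mul_assoc, ← pow_succ',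
        ← pow_succ']
    have h2 : z ^ (2 * (j + 2) + 1) = t • z ^ (2 * j + 4) - z ^ (2 * j + 3) := by
      rw [show 2 * (j + 2) + 1 = 2 * j + 3 + 2 by ring, pow_add, pow_two, hz, mul_sub,
        mul_smul_comm, ← pow_succ, mul_one]
    rw [chebyshevV, sub_smul, mul_smul, h1, h0, h2, hz]
    module

end ChebyshevV

def wordMap {G : Type*} [Group G] (k : ℕ) (ε : ℤ) (g : G × G) : G :=
  g.1 ^ 2 * (g.1 ^ 2 * g.2 * g.1 ^ (2 * ε) * g.2⁻¹) ^ k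

theorem MonoidHom.map_wordMap {G H : Type*} [Group G] [Group H] (f : G →* H) (k : ℕ) (ε : ℤ)
    (g : G × G) : f (wordMap k ε g) = wordMap k ε (f g.1, f g.2) := by
  simp [wordMap]

namespace Matrix

open scoped MatrixGroups

variable {R : Type*} [CommRing R]

theorem mul_self_eq_trace_smul_sub_one_of_det_eq_one {M : Matrix (Fin 2) (Fin 2) R}
    (h : M.det = 1) : M * M = M.trace • M - 1 := by
  rw [det_fin_two] at h
  rw [eta_fin_two M, trace_fin_two_of]
  ext i j
  fin_cases i <;> fin_cases j <;> simp [mul_apply, Fin.sum_univ_two] <;>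
    first | ring1 | linear_combination -h

theorem trace_mul_mul_pow_eq_mul_chebyshevV {A B : Matrix (Fin 2) (Fin 2) R}
    (hA : A.det = 1) (hB : B.det = 1) (hAB : A.trace = B.trace) :
    ∀ j, (A * (A * B) ^ j).trace = A.trace * chebyshevV (A * B).trace j
  | 0 => by simp [chebyshevV]
  | 1 => by
    rw [pow_one, ← mul_assoc, mul_self_eq_trace_smul_sub_one_of_det_eq_one hA, sub_mul, one_mul,
      smul_mul_assoc, trace_sub, trace_smul, smul_eq_mul, ← hAB, chebyshevV]
    ring
  | j + 2 => by
    have hCH : (A * B) * (A * B) = (A * B).trace • (A * B) - 1 :=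
      mul_self_eq_trace_smul_sub_one_of_det_eq_one (by rw [det_mul, hA, hB, one_mul])
    have hrec : A * (A * B) ^ (j + 2)
        = (A * B).trace • (A * (A * B) ^ (j + 1)) - A * (A * B) ^ j := by
      rw [pow_add, pow_two, hCH, mul_sub, mul_smul_comm, ← pow_succ, mul_one, mul_sub,
        mul_smul_comm]
    rw [hrec, trace_sub, trace_smul, smul_eq_mul,
      trace_mul_mul_pow_eq_mul_chebyshevV hA hB hAB (j + 1),
      trace_mul_mul_pow_eq_mul_chebyshevV hA hB hAB j, chebyshevV]
    ring

theorem ProjectiveSpecialLinearGroup.trace_eq_zero_of_mk_eq_mk {n : Type*}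
    [DecidableEq n] [Fintype n] {W S : SpecialLinearGroup n R}
    (h : (QuotientGroup.mk W : ProjectiveSpecialLinearGroup n R) = QuotientGroup.mk S)
    (hS : trace (S : Matrix n n R) = 0) : trace (W : Matrix n n R) = 0 := by
  obtain ⟨r, -, hr⟩ := SpecialLinearGroup.mem_center_iff.1 (QuotientGroup.eq.1 h.symm)
  have hW : (W : Matrix n n R) = S * r • 1 := by
    rw [smul_one_eq_diagonal, ← scalar_apply, hr, ← SpecialLinearGroup.coe_mul,
      mul_inv_cancel_left]
  rw [hW, mul_smul_comm, mul_one, trace_smul, hS, smul_zero]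

theorem card_GL_fin_two (F : Type*) [Field F] [Fintype F] :
    Nat.card (GL (Fin 2) F)
      = (Fintype.card F ^ 2 - 1) * (Fintype.card F ^ 2 - Fintype.card F) := by
  rw [card_GL_field, Fin.prod_univ_two]
  simp

namespace SpecialLinearGroup

theorem trace_conj {n : Type*} [DecidableEq n] [Fintype n] (A B : SpecialLinearGroup n R) :
    trace ((A * B * A⁻¹ : SpecialLinearGroup n R) : Matrix n n R)
      = trace (B : Matrix n n R) := by
  rw [coe_mul, coe_mul, trace_mul_cycle, ← coe_mul, inv_mul_cancel, coe_one, one_mul]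

local notation:1024 "↑ₘ" A:1024 => ((A : SL(2, R)) : Matrix (Fin 2) (Fin 2) R)

theorem trace_inv_fin_two (A : SL(2, R)) : trace ↑ₘ(A⁻¹) = trace ↑ₘA := by
  rw [coe_inv, adjugate_fin_two, trace_fin_two_of, trace_fin_two, add_comm]

theorem trace_sq_fin_two (A : SL(2, R)) :
    trace ↑ₘ(A ^ 2) = trace ↑ₘA ^ 2 - 2 := by
  rw [coe_pow, pow_two, mul_self_eq_trace_smul_sub_one_of_det_eq_one (det_coe A), trace_sub,
    trace_smul, trace_one, smul_eq_mul, Fintype.card_fin]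
  push_cast
  ring

theorem chebyshevV_trace_ne_zero {k : ℕ} (hcop : (Nat.card SL(2, R)).Coprime (2 * k + 1))
    (hk : ((2 * k + 1 : ℕ) : R) ≠ 0) (ζ : SL(2, R)) :
    chebyshevV (trace ↑ₘζ) k ≠ 0 := by
  intro h
  have hpow : ↑ₘζ ^ (2 * k + 1) = -1 := by
    have hV := chebyshevV_smul_pow_mul_add_one
      (mul_self_eq_trace_smul_sub_one_of_det_eq_one (det_coe ζ)) k
    rw [h, zero_smul] at hV
    exact eq_neg_of_add_eq_zero_left hV.symm
  have hsq : ζ ^ 2 = 1 := hcop.pow_left_bijective.injective <| Subtype.ext <| by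
    rw [one_pow, coe_pow, coe_pow, ← pow_mul, mul_comm, pow_mul, hpow, neg_one_sq, coe_one]
  have hneg : ↑ₘζ = -1 := by
    rw [← hpow, pow_succ, pow_mul, ← coe_pow, hsq, coe_one, one_pow, one_mul]
  rw [hneg, trace_neg, trace_one, Fintype.card_fin, Nat.cast_ofNat, chebyshevV_neg_two] at h
  push_cast at hk h
  exact hk ((((isUnit_neg_one).pow k).mul_right_eq_zero).1 h)

theorem trace_wordMap {k : ℕ} {ε : ℤ} (hε : ε = 1 ∨ ε = -1) (X Y : SL(2, R)) :
    trace ↑ₘ(wordMap k ε (X, Y))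
      = trace ↑ₘ(X ^ 2) * chebyshevV (trace ↑ₘ(X ^ 2 * (Y * X ^ (2 * ε) * Y⁻¹))) k := by
  have hconj : trace ↑ₘ(Y * X ^ (2 * ε) * Y⁻¹) = trace ↑ₘ(X ^ 2) := by
    rw [trace_conj]
    rcases hε with rfl | rfl
    · rfl
    · rw [show X ^ (2 * -1 : ℤ) = (X ^ 2)⁻¹ by group, trace_inv_fin_two]
  have hword : wordMap k ε (X, Y) = X ^ 2 * (X ^ 2 * (Y * X ^ (2 * ε) * Y⁻¹)) ^ k := by
    simp only [wordMap, mul_assoc]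
  have htrace := trace_mul_mul_pow_eq_mul_chebyshevV (det_coe (X ^ 2)) (det_coe _) hconj.symm k
  rw [← coe_mul, ← coe_pow, ← coe_mul] at htrace
  rw [hword, htrace]

theorem not_surjective_wordMap [IsDomain R] {k : ℕ} {ε : ℤ} (hε : ε = 1 ∨ ε = -1)
    (h2 : ¬IsSquare (2 : R)) (hcop : (Nat.card SL(2, R)).Coprime (2 * k + 1))
    (hk : ((2 * k + 1 : ℕ) : R) ≠ 0) :
    ¬Function.Surjective (wordMap k ε :
      ProjectiveSpecialLinearGroup (Fin 2) R × ProjectiveSpecialLinearGroup (Fin 2) R → _) := by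
  let S : SL(2, R) := ⟨!![0, -1; 1, 0], by simp [det_fin_two_of]⟩
  intro hsurj
  obtain ⟨⟨x, y⟩, hxy⟩ := hsurj (QuotientGroup.mk S)
  obtain ⟨X, rfl⟩ := QuotientGroup.mk_surjective x
  obtain ⟨Y, rfl⟩ := QuotientGroup.mk_surjective y
  have hXY : (QuotientGroup.mk (wordMap k ε (X, Y)) : ProjectiveSpecialLinearGroup (Fin 2) R)
      = QuotientGroup.mk S :=
    ((QuotientGroup.mk' _).map_wordMap k ε (X, Y)).trans hxy
  have htr := ProjectiveSpecialLinearGroup.trace_eq_zero_of_mk_eq_mk hXY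
    (by simp [S, trace_fin_two_of])
  rw [trace_wordMap hε] at htr
  rcases mul_eq_zero.1 htr with h | h
  · rw [trace_sq_fin_two, sub_eq_zero] at h
    exact h2 ⟨trace ↑ₘX, by rw [← h, pow_two]⟩
  · exact chebyshevV_trace_ne_zero hcop hk _ h

theorem not_surjective_wordMap_of_card {F : Type*} [Field F] [Fintype F]
    {k : ℕ} {ε : ℤ} (hε : ε = 1 ∨ ε = -1) (h6 : Nat.Coprime 6 (2 * k + 1))
    (h8 : Fintype.card F % 8 = 3) (hq : (Fintype.card F : ZMod (2 * k + 1)) = 2) :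
    ¬Function.Surjective (wordMap k ε :
      ProjectiveSpecialLinearGroup (Fin 2) F × ProjectiveSpecialLinearGroup (Fin 2) F → _) := by
  set m := 2 * k + 1
  have hq_cop : (Fintype.card F).Coprime m := by
    rw [← ZMod.isUnit_iff_coprime, hq]
    exact_mod_cast (ZMod.isUnit_iff_coprime 2 m).2 (h6.coprime_dvd_left (by norm_num))
  have hGL_cop : (Nat.card (GL (Fin 2) F)).Coprime m := by
    rw [← ZMod.isUnit_iff_coprime, card_GL_fin_two]
    push_cast [Nat.cast_sub (Nat.one_le_pow _ _ Fintype.card_pos),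
      Nat.cast_sub (Nat.le_self_pow two_ne_zero _)]
    rw [hq, show ((2 : ZMod m) ^ 2 - 1) * (2 ^ 2 - 2) = (6 : ℕ) by norm_num,
      ZMod.isUnit_iff_coprime]
    exact h6
  have hSL_cop : (Nat.card SL(2, F)).Coprime m :=
    hGL_cop.coprime_dvd_left (Subgroup.card_dvd_of_injective toGL toGL_injective)
  have hm : (m : F) ≠ 0 := fun h ↦ CharP.ringChar_ne_one <|
    ((hq_cop.coprime_dvd_left (ringChar.dvd (FiniteField.cast_card_eq_zero F))).eq_one_of_dvd
      (ringChar.dvd h))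
  have h2 : ¬IsSquare (2 : F) := by
    rw [FiniteField.isSquare_two_iff]
    omega
  exact not_surjective_wordMap hε h2 hSL_cop hm

end SpecialLinearGroup

end Matrix

theorem Nat.infinite_setOf_prime_and_eq_mod_and_eq_mod {a b : ℕ} [NeZero a] [NeZero b]
    (hab : a.Coprime b) {u : ZMod a} {v : ZMod b} (hu : IsUnit u) (hv : IsUnit v) :
    {p : ℕ | p.Prime ∧ (p : ZMod a) = u ∧ (p : ZMod b) = v}.Infinite := by
  let e := ZMod.chineseRemainder hab
  have : NeZero (a * b) := ⟨mul_ne_zero (NeZero.ne a) (NeZero.ne b)⟩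
  have huv : IsUnit (e.symm (u, v)) := (Prod.isUnit_iff (x := (u, v)).2 ⟨hu, hv⟩).map e.symm
  refine (infinite_setOfPred_prime_and_eq_mod huv).mono ?_
  rintro p ⟨hp, hpuv⟩
  have hcrt := congrArg e hpuv
  rw [map_natCast, RingEquiv.apply_symm_apply, Prod.ext_iff] at hcrt
  exact ⟨hp, hcrt⟩

theorem infinitely_many_primes_nonsurjective_word_map_general
    (k : ℕ) (hk3 : ¬ (k % 3 = 1)) (ε : ℤ) (hε : ε = 1 ∨ ε = -1) :
    {p : ℕ | p.Prime ∧
      ¬ Function.Surjective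
        (fun g : Matrix.ProjectiveSpecialLinearGroup (Fin 2) (ZMod p) ×
            Matrix.ProjectiveSpecialLinearGroup (Fin 2) (ZMod p) =>
          g.1 ^ 2 * (g.1 ^ 2 * g.2 * g.1 ^ (2 * ε) * g.2⁻¹) ^ k)}.Infinite := by
  have h2 : Nat.Coprime 2 (2 * k + 1) := Nat.coprime_two_left.2 (odd_two_mul_add_one k)
  have h6 : Nat.Coprime 6 (2 * k + 1) :=
    h2.mul_left ((Nat.prime_three.coprime_iff_not_dvd).2 (by omega))
  have h3_unit : IsUnit (3 : ZMod 8) := by decide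
  have h2_unit : IsUnit (2 : ZMod (2 * k + 1)) := by
    exact_mod_cast (ZMod.isUnit_iff_coprime 2 _).2 h2
  refine (Nat.infinite_setOf_prime_and_eq_mod_and_eq_mod (h2.pow_left 3) h3_unit h2_unit).mono ?_
  rintro p ⟨hp, hp8, hpm⟩
  have := Fact.mk hp
  refine ⟨hp, Matrix.SpecialLinearGroup.not_surjective_wordMap_of_card hε h6 ?_
    (by rwa [ZMod.card])⟩
  rw [ZMod.card, ← ZMod.val_natCast 8, hp8]
  rfl

/-- Corollary of Theorem 3.1 and Proposition 3.2: for `k ≥ 1` with `k ≢ 1 (mod 3)` and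
`ε = ±1`, there are infinitely many primes `p` such that the word map
`(x, y) ↦ x²·(x²·y·x^{2ε}·y⁻¹)^k` is not surjective on `PSL₂(𝔽_p)`. -/
theorem infinitely_many_primes_nonsurjective_word_map
    (k : ℕ) (hk : 1 ≤ k) (hk3 : ¬ (k % 3 = 1)) (ε : ℤ) (hε : ε = 1 ∨ ε = -1) :
    {p : ℕ | p.Prime ∧
      ¬ Function.Surjective
        (fun g : Matrix.ProjectiveSpecialLinearGroup (Fin 2) (ZMod p) ×
            Matrix.ProjectiveSpecialLinearGroup (Fin 2) (ZMod p) =>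
          g.1 ^ 2 * (g.1 ^ 2 * g.2 * g.1 ^ (2 * ε) * g.2⁻¹) ^ k)}.Infinite :=
  infinitely_many_primes_nonsurjective_word_map_general k hk3 ε hε
end
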